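/- For every integer n ≥ 2, M_{2n+1} = 2n − m_{n+1}, where m_k (resp. M_k) is the minimum (resp. maximum) number of alternations among length-k factors of the Thue–Morse sequence. -/

import Mathlib

/-!
Write `d i = [t i ≠ t (i + 1)]`. Since `t = μ t`, the letters `t (2m+1) t (2m+2)` form
`μ (t (m+1))`, so `d (2m+1) = 1` and `d (2m+2) = 1 - d (m+1)`. Summing over pairs, a factor of
length `2n+1` starting at `i ≥ 1` has `2n - a` alternations, where `a` counts the alternations of
the factor of length `n+1` starting at `⌈i/2⌉`; every start `j ≥ 1` is some `⌈i/2⌉`. So the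
alternation counts in length `2n+1` are the numbers `2n - a`, and the maximum of the former is
`2n` minus the minimum of the latter.
-/

/-- The reduction of a word: replace each maximal run of identical characters
by a single character. -/
def red {α : Type*} [DecidableEq α] (w : List α) : List α :=
  w.destutter (· ≠ ·)

/-- The length-`k` factor of the infinite sequence `x` (1-indexed) starting at
position `i`. -/
def factorAt {α : Type*} (x : ℕ → α) (i k : ℕ) : List α :=
  (List.range k).map (fun j => x (i + j))

/-- The reduced factor complexity: the number of length-`n` factors of `x`,
counted up to reduced-equivalence (`red v = red w`). -/
noncomputable def redFactorComplexity {α : Type*} [DecidableEq α]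
    (x : ℕ → α) (n : ℕ) : ℕ :=
  Set.ncard { u : List α | ∃ i ≥ 1, u = red (factorAt x i n) }

/-- The Thue–Morse sequence (1-indexed): `t n` is the parity of the number of
1's in the binary expansion of `n - 1`. -/
def thueMorse (n : ℕ) : Bool :=
  decide ((Nat.digits 2 (n - 1)).sum % 2 = 1)

/-- The number of alternations (occurrences of 01 or 10) in a binary word. -/
def alt (w : List Bool) : ℕ :=
  (List.zipWith (fun a b => a != b) w w.tail).count true

/-- The minimum number of alternations among length-`k` factors of Thue–Morse. -/
noncomputable def tmAltMin (k : ℕ) : ℕ :=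
  sInf { a : ℕ | ∃ i ≥ 1, a = alt (factorAt thueMorse i k) }

/-- The maximum number of alternations among length-`k` factors of Thue–Morse. -/
noncomputable def tmAltMax (k : ℕ) : ℕ :=
  sSup { a : ℕ | ∃ i ≥ 1, a = alt (factorAt thueMorse i k) }

/-- The Thue–Morse morphism `0 → 01`, `1 → 10`. -/
def mu (w : List Bool) : List Bool :=
  w.flatMap (fun b => if b then [true, false] else [false, true])

/-- The regular paperfolding sequence (1-indexed): writing `n = n' * 2^k` with
`n'` odd, `f n = 1` iff `n' ≡ 3 (mod 4)`. -/
def paperfold (n : ℕ) : Bool :=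
  decide ((n / 2 ^ (n.factorization 2)) % 4 = 3)

/-- The reduced abelian complexity: the number of length-`n` factors of `x`,
counted up to the equivalence identifying `v` and `w` whenever `red v` is a
rearrangement of the characters of `red w`. -/
noncomputable def redAbelianComplexity {α : Type*} [DecidableEq α]
    (x : ℕ → α) (n : ℕ) : ℕ :=
  Set.ncard { m : Multiset α | ∃ i ≥ 1, m = ↑(red (factorAt x i n)) }

theorem thueMorse_succ (m : ℕ) :
    thueMorse (m + 1) = decide ((Nat.digits 2 m).sum % 2 = 1) := rfl

theorem thueMorse_two_mul_add_one (m : ℕ) : thueMorse (2 * m + 1) = thueMorse (m + 1) := by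
  rcases Nat.eq_zero_or_pos m with rfl | hm
  · rfl
  · rw [thueMorse_succ, thueMorse_succ, Nat.digits_def' (by norm_num) (by omega)]
    simp

theorem thueMorse_two_mul_add_two (m : ℕ) : thueMorse (2 * m + 2) = !thueMorse (m + 1) := by
  rw [thueMorse_succ, thueMorse_succ, Nat.digits_def' (by norm_num) (by omega)]
  have : (2 * m + 1) / 2 = m := by omega
  simp only [this, List.sum_cons]
  rcases Nat.mod_two_eq_zero_or_one (Nat.digits 2 m).sum with h | h <;> simp [Nat.add_mod, h]

def altAt (x : ℕ → Bool) (i : ℕ) : ℕ := (x i != x (i + 1)).toNat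

theorem factorAt_succ {α : Type*} (x : ℕ → α) (i k : ℕ) :
    factorAt x i (k + 1) = x i :: factorAt x (i + 1) k := by
  simp only [factorAt, List.range_succ_eq_map, List.map_cons, List.map_map, Nat.add_zero]
  congr 2
  funext j
  simp only [Function.comp_apply]
  congr 1
  omega

theorem alt_cons_cons (a b : Bool) (w : List Bool) :
    alt (a :: b :: w) = (a != b).toNat + alt (b :: w) := by
  cases a <;> cases b <;> simp [alt, Nat.add_comm]

theorem alt_factorAt (x : ℕ → Bool) (i k : ℕ) :
    alt (factorAt x i (k + 1)) = ∑ j ∈ Finset.range k, altAt x (i + j) := by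
  induction k generalizing i with
  | zero => rfl
  | succ k ih =>
    rw [factorAt_succ, factorAt_succ, alt_cons_cons, ← factorAt_succ, ih, Finset.sum_range_succ']
    simp only [altAt, Nat.add_zero, Nat.add_comm, Nat.add_left_comm]

theorem altAt_thueMorse_two_mul_add_one (m : ℕ) : altAt thueMorse (2 * m + 1) = 1 := by
  rw [altAt, thueMorse_two_mul_add_one, show 2 * m + 1 + 1 = 2 * m + 2 by ring,
    thueMorse_two_mul_add_two]
  cases thueMorse (m + 1) <;> rfl

theorem altAt_thueMorse_two_mul_add_two (m : ℕ) :
    altAt thueMorse (2 * m + 2) + altAt thueMorse (m + 1) = 1 := by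
  rw [altAt, altAt, thueMorse_two_mul_add_two, show 2 * m + 2 + 1 = 2 * (m + 1) + 1 by ring,
    thueMorse_two_mul_add_one]
  cases thueMorse (m + 1) <;> cases thueMorse (m + 1 + 1) <;> rfl

theorem altAt_thueMorse_pair {i : ℕ} (hi : 1 ≤ i) (j : ℕ) :
    altAt thueMorse (i + 2 * j) + altAt thueMorse (i + (2 * j + 1)) +
      altAt thueMorse ((i + 1) / 2 + j) = 2 := by
  obtain ⟨a, rfl | rfl⟩ : ∃ a, i = 2 * a + 1 ∨ i = 2 * a + 2 := ⟨(i - 1) / 2, by omega⟩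
  · have h₁ := altAt_thueMorse_two_mul_add_one (a + j)
    have h₂ := altAt_thueMorse_two_mul_add_two (a + j)
    rw [show 2 * a + 1 + 2 * j = 2 * (a + j) + 1 by ring,
      show 2 * a + 1 + (2 * j + 1) = 2 * (a + j) + 2 by ring,
      show (2 * a + 1 + 1) / 2 + j = a + j + 1 by omega]
    omega
  · have h₁ := altAt_thueMorse_two_mul_add_one (a + j + 1)
    have h₂ := altAt_thueMorse_two_mul_add_two (a + j)
    rw [show 2 * a + 2 + 2 * j = 2 * (a + j) + 2 by ring,
      show 2 * a + 2 + (2 * j + 1) = 2 * (a + j + 1) + 1 by ring,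
      show (2 * a + 2 + 1) / 2 + j = a + j + 1 by omega]
    omega

theorem alt_thueMorse_factor_add_alt_half {i : ℕ} (hi : 1 ≤ i) (n : ℕ) :
    alt (factorAt thueMorse i (2 * n + 1)) + alt (factorAt thueMorse ((i + 1) / 2) (n + 1))
      = 2 * n := by
  rw [alt_factorAt, alt_factorAt]
  induction n with
  | zero => rfl
  | succ n ih =>
    rw [show 2 * (n + 1) = 2 * n + 1 + 1 by ring, Finset.sum_range_succ, Finset.sum_range_succ,
      Finset.sum_range_succ]
    have := altAt_thueMorse_pair hi n
    omega

theorem alts_thueMorse_two_mul_add_one (n : ℕ) :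
    {a | ∃ i ≥ 1, a = alt (factorAt thueMorse i (2 * n + 1))} =
      (2 * n - ·) '' {a | ∃ i ≥ 1, a = alt (factorAt thueMorse i (n + 1))} := by
  ext a
  constructor
  · rintro ⟨i, hi, rfl⟩
    have := alt_thueMorse_factor_add_alt_half hi n
    exact ⟨_, ⟨(i + 1) / 2, by omega, rfl⟩, by dsimp only; omega⟩
  · rintro ⟨_, ⟨i, hi, rfl⟩, rfl⟩
    have := alt_thueMorse_factor_add_alt_half (i := 2 * i) (by omega) n
    rw [show (2 * i + 1) / 2 = i by omega] at this
    exact ⟨2 * i, by omega, by dsimp only; omega⟩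

theorem stmt5_general (n : ℕ) :
    tmAltMax (2 * n + 1) = 2 * n - tmAltMin (n + 1) := by
  rw [tmAltMax, alts_thueMorse_two_mul_add_one, tmAltMin]
  refine (Antitone.map_csInf_of_continuousAt continuous_of_discreteTopology.continuousAt
    (fun _ _ h => Nat.sub_le_sub_left h _) ?_).symm
  exact ⟨_, 1, le_rfl, rfl⟩

theorem stmt5 (n : ℕ) (hn : 2 ≤ n) :
    tmAltMax (2 * n + 1) = 2 * n - tmAltMin (n + 1) :=
  stmt5_general n
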